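/- arXiv:1609.03662 — 8 statements merged into one kernel-verified Lean document; each statement's English description precedes it below -/
import Mathlib

section
/- Let q be an odd prime power, r ≥ 1 with gcd(r, q-1) = 1, a ∈ F_{q^2}^*, and f(X) = X^r(a + X^{2(q-1)}). Let α be odd with 1 ≤ α ≤ q-2, set s = α + (q-1-α)q, and write (α+1)r - 2α = c(q+1) - d with 0 ≤ d < q+1. Then any integers i, j with 0 ≤ i ≤ α, 0 ≤ j ≤ q-1-α and 2(i-j) ≡ (α+1)r (mod q+1) satisfy 2(i-j) - (α+1)r ∈ {-c(q+1), -(c+1)(q+1)}. -/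
theorem Int.eq_or_eq_sub_of_dvd_of_lt_of_lt {m n x : ℤ} (hdvd : m ∣ x)
    (hlo : (n - 2) * m < x) (hhi : x < (n + 1) * m) : x = n * m ∨ x = (n - 1) * m := by
  obtain ⟨k, rfl⟩ := hdvd
  have hm : 0 < m := by nlinarith
  have hk_lo : n - 2 < k := lt_of_mul_lt_mul_right (by linarith) hm.le
  have hk_hi : k < n + 1 := lt_of_mul_lt_mul_right (by linarith) hm.le
  obtain rfl | rfl : k = n ∨ k = n - 1 := by omega
  exacts [Or.inl (mul_comm _ _), Or.inr (mul_comm _ _)]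

theorem surviving_terms_general
    (q r : ℤ)
    (α : ℤ)
    (c d : ℤ) (hd0 : 0 ≤ d) (hd1 : d < q + 1)
    (hcd : (α + 1) * r - 2 * α = c * (q + 1) - d)
    (i j : ℤ) (hi0 : 0 ≤ i) (hi1 : i ≤ α) (hj0 : 0 ≤ j) (hj1 : j ≤ q - 1 - α)
    (hmod : (q + 1) ∣ (2 * (i - j) - (α + 1) * r)) :
    2 * (i - j) - (α + 1) * r = -(c * (q + 1)) ∨
      2 * (i - j) - (α + 1) * r = -((c + 1) * (q + 1)) := by
  -- `2(i - j)` ranges over `[-2(q - 1 - α), 2α]`, so the difference lies in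
  -- `[d - (c + 2)(q + 1) + 4, d - c(q + 1)]`, which meets only two multiples of `q + 1`.
  have hlo : (-c - 2) * (q + 1) < 2 * (i - j) - (α + 1) * r := by linarith
  have hhi : 2 * (i - j) - (α + 1) * r < (-c + 1) * (q + 1) := by linarith
  rcases Int.eq_or_eq_sub_of_dvd_of_lt_of_lt hmod hlo hhi with h | h
  · left; linarith
  · right; linarith

/-- With `(α+1)r - 2α = c(q+1) - d`, `0 ≤ d < q+1`, any `0 ≤ i ≤ α`, `0 ≤ j ≤ q-1-α`
with `2(i-j) ≡ (α+1)r (mod q+1)` satisfy `2(i-j) - (α+1)r ∈ {-c(q+1), -(c+1)(q+1)}`. -/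
theorem surviving_terms
    (q r : ℤ) (hq : IsPrimePow q) (hqodd : Odd q)
    (hr : 1 ≤ r) (hgcd : Int.gcd r (q - 1) = 1)
    (α : ℤ) (hαodd : Odd α) (hα1 : 1 ≤ α) (hα2 : α ≤ q - 2)
    (c d : ℤ) (hd0 : 0 ≤ d) (hd1 : d < q + 1)
    (hcd : (α + 1) * r - 2 * α = c * (q + 1) - d)
    (i j : ℤ) (hi0 : 0 ≤ i) (hi1 : i ≤ α) (hj0 : 0 ≤ j) (hj1 : j ≤ q - 1 - α)
    (hmod : (q + 1) ∣ (2 * (i - j) - (α + 1) * r)) :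
    2 * (i - j) - (α + 1) * r = -(c * (q + 1)) ∨
      2 * (i - j) - (α + 1) * r = -((c + 1) * (q + 1)) :=
  surviving_terms_general q r α c d hd0 hd1 hcd i j hi0 hi1 hj0 hj1 hmod
end

section
/- Let q be an odd prime power, r ≥ 1 with gcd(r,q-1)=1, and write (α+1)r - 2α = c(q+1) - d with 0 ≤ d < q+1 for an odd α with 1 ≤ α ≤ q-2. Then d = q-1 if and only if (r-2)(α+1) = (c-1)(q+1). Moreover, there exists an integer pair (α, c) with 1 ≤ α+1 ≤ q satisfying (r-2)(α+1) = (c-1)(q+1) if and only if gcd(r-2, q+1) > 1. -/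
/-!
The first equivalence is the identity `(r-2)(α+1) - (c-1)(q+1) = (q-1) - d`. For the second,
`q+1` divides `(r-2)a` for some `0 < a < q+1` exactly when `q+1` and `r-2` have a common factor
`g > 1`: if they are coprime, `q+1` would divide `a`; otherwise `a = (q+1)/g` works.
-/

theorem eq_sub_one_iff_mul_eq_mul_of_mul_sub_eq_mul_sub {R : Type*} [CommRing R]
    {q r α c d : R} (h : (α + 1) * r - 2 * α = c * (q + 1) - d) :
    d = q - 1 ↔ (r - 2) * (α + 1) = (c - 1) * (q + 1) := by
  constructor
  · rintro rfl
    linear_combination h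
  · intro h'
    linear_combination h - h'

theorem Int.exists_pos_lt_mul_eq_mul_iff_one_lt_gcd {m n : ℤ} (hn : 0 < n) :
    (∃ a b : ℤ, 0 < a ∧ a < n ∧ m * a = b * n) ↔ 1 < Int.gcd m n := by
  constructor
  · rintro ⟨a, b, ha0, han, h⟩
    by_contra! hg
    have hcop : IsCoprime n m := by
      rw [Int.isCoprime_iff_gcd_eq_one, Int.gcd_comm]
      have := Int.gcd_pos_of_ne_zero_right m hn.ne'
      omega
    have hna : n ∣ a := hcop.dvd_of_dvd_mul_left ⟨b, by rw [h, mul_comm]⟩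
    linarith [Int.le_of_dvd ha0 hna]
  · intro hg
    have hg' : (1 : ℤ) < Int.gcd m n := by exact_mod_cast hg
    obtain ⟨a, ha⟩ := Int.gcd_dvd_right m n
    obtain ⟨b, hb⟩ := Int.gcd_dvd_left m n
    have ha0 : 0 < a := by nlinarith
    exact ⟨a, b, ha0, by nlinarith, by linear_combination a * hb - b * ha⟩

theorem d_eq_q_sub_one_iff_general
    (q r : ℤ)
    (α : ℤ) (hα1 : 1 ≤ α) (hα2 : α ≤ q - 2)
    (c d : ℤ)
    (hcd : (α + 1) * r - 2 * α = c * (q + 1) - d) :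
    (d = q - 1 ↔ (r - 2) * (α + 1) = (c - 1) * (q + 1)) ∧
    ((∃ α' c' : ℤ, 1 ≤ α' + 1 ∧ α' + 1 ≤ q ∧ (r - 2) * (α' + 1) = (c' - 1) * (q + 1)) ↔
      1 < Int.gcd (r - 2) (q + 1)) := by
  refine ⟨eq_sub_one_iff_mul_eq_mul_of_mul_sub_eq_mul_sub hcd, ?_⟩
  rw [← Int.exists_pos_lt_mul_eq_mul_iff_one_lt_gcd (by linarith : 0 < q + 1)]
  constructor
  · rintro ⟨α', c', h1, h2, h⟩
    exact ⟨α' + 1, c' - 1, by omega, by omega, h⟩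
  · rintro ⟨a, b, ha0, han, h⟩
    exact ⟨a - 1, b + 1, by omega, by omega, by simpa using h⟩

/-- `d = q-1` iff `(r-2)(α+1) = (c-1)(q+1)`; moreover such a pair `(α, c)` with
`1 ≤ α+1 ≤ q` exists iff `gcd(r-2, q+1) > 1`. -/
theorem d_eq_q_sub_one_iff
    (q r : ℤ) (hq : IsPrimePow q) (hqodd : Odd q)
    (hr : 1 ≤ r) (hgcd : Int.gcd r (q - 1) = 1)
    (α : ℤ) (hαodd : Odd α) (hα1 : 1 ≤ α) (hα2 : α ≤ q - 2)
    (c d : ℤ) (hd0 : 0 ≤ d) (hd1 : d < q + 1)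
    (hcd : (α + 1) * r - 2 * α = c * (q + 1) - d) :
    (d = q - 1 ↔ (r - 2) * (α + 1) = (c - 1) * (q + 1)) ∧
    ((∃ α' c' : ℤ, 1 ≤ α' + 1 ∧ α' + 1 ≤ q ∧ (r - 2) * (α' + 1) = (c' - 1) * (q + 1)) ↔
      1 < Int.gcd (r - 2) (q + 1)) :=
  d_eq_q_sub_one_iff_general q r α hα1 hα2 c d hcd
end

section
/- Let q be a prime power, r ≥ 1, and a ∈ F_{q^2}^*. The polynomial g(X) = X^r(a + X^{q-1}) is a permutation polynomial of F_{q^2} if and only if gcd(r, q-1) = 1, (q+1) | (r-1), and a^{q+1} ≠ 1. -/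
/-!
Write `g x = x ^ r * h (x ^ (q - 1))` with `h u = a + u`. The map `x ↦ x ^ (q - 1)` sends
`F_{q²}ˣ` onto the group `μ_{q+1}` of `(q + 1)`-st roots of unity, with fibres the cosets of
`μ_{q-1}`; hence `g` permutes `F_{q²}` iff `gcd(r, q - 1) = 1` and `ψ u = u ^ r * h u ^ (q - 1)`
permutes `μ_{q+1}`. On `μ_{q+1}` we have `u ^ q = u⁻¹`, so Frobenius gives
`ψ u = u ^ (r - 1) * (a ^ q * u + 1) / (a + u)`. If `a ^ (q + 1) = 1` then `ψ (-a) = 0`.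
Otherwise the Möbius factor permutes `μ_{q+1}`, so `ψ` does when `(q + 1) ∣ (r - 1)`; and when
`u ^ (r - 1) = u ^ k` with `0 < k ≤ q`, the sum of `ψ` over `μ_{q+1}` is `(-a) ^ (k - 1) ≠ 0`,
whereas a permutation of `μ_{q+1}` has sum `0`.
-/

open Finset Polynomial

theorem IsCyclic.exists_pow_eq_of_pow_eq_one {G : Type*} [Group G] [Finite G] [IsCyclic G]
    {d e : ℕ} (hG : Nat.card G = d * e) {u : G} (hu : u ^ e = 1) : ∃ x : G, x ^ d = u := by
  obtain ⟨g, hg⟩ := IsCyclic.exists_monoid_generator (α := G)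
  obtain ⟨t, rfl⟩ := Submonoid.mem_powers_iff _ _ |>.mp (hg u)
  have he : 0 < e := Nat.pos_of_ne_zero fun h => Nat.card_pos.ne' (by simpa [h] using hG)
  have hdt : d * e ∣ t * e := by
    rw [← hG, ← orderOf_eq_card_of_forall_mem_powers hg]
    exact orderOf_dvd_of_pow_eq_one (by rwa [pow_mul])
  obtain ⟨s, rfl⟩ := Nat.dvd_of_mul_dvd_mul_right he hdt
  exact ⟨g ^ s, by rw [← pow_mul, mul_comm]⟩

theorem exists_isPrimitiveRoot_of_dvd_card_units {K : Type*} [Field K] [Finite K] {e : ℕ}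
    (he : e ∣ Nat.card Kˣ) : ∃ ζ : K, IsPrimitiveRoot ζ e := by
  obtain ⟨g, hg⟩ := IsCyclic.exists_ofOrder_eq_natCard (α := Kˣ)
  obtain ⟨d, hd⟩ := he
  have hd0 : d ≠ 0 := by rintro rfl; exact Nat.card_pos.ne' (by simpa using hd)
  have hord : orderOf (g ^ d) = e := by
    rw [orderOf_pow_of_dvd hd0 (by rw [hg, hd]; exact dvd_mul_left d e), hg, hd,
      Nat.mul_div_cancel _ (Nat.pos_of_ne_zero hd0)]
  exact ⟨_, IsPrimitiveRoot.coe_units_iff.mpr (hord ▸ IsPrimitiveRoot.orderOf _)⟩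

theorem IsPrimitiveRoot.sum_pow_nthRootsFinset {K : Type*} [Field K] {ζ : K} {n : ℕ}
    (hζ : IsPrimitiveRoot ζ n) (m : ℕ) :
    ∑ u ∈ nthRootsFinset n (1 : K), u ^ m = if n ∣ m then (n : K) else 0 := by
  rcases n.eq_zero_or_pos with rfl | hn
  · simp
  split_ifs with hnm
  · rw [sum_congr rfl fun u hu => ?_, sum_const, hζ.card_nthRootsFinset, nsmul_one]
    obtain ⟨c, rfl⟩ := hnm
    rw [pow_mul, (Polynomial.mem_nthRootsFinset hn 1).mp hu, one_pow]
  · have hζ0 : ζ ≠ 0 := hζ.ne_zero hn.ne'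
    -- multiplication by `ζ` permutes the roots of unity and scales the sum by `ζ ^ m ≠ 1`
    refine eq_zero_of_mul_eq_self_left (b := ζ ^ m)
      (fun h => hnm ((hζ.pow_eq_one_iff_dvd m).mp h)) ?_
    rw [mul_sum]
    refine sum_nbij' (ζ * ·) (ζ⁻¹ * ·) ?_ ?_ ?_ ?_ ?_ <;>
      simp [Polynomial.mem_nthRootsFinset hn, mul_pow, inv_pow, hζ.pow_eq_one, hζ0]

theorem IsPrimitiveRoot.sum_pow_div_sub {K : Type*} [Field K] {ζ : K} {n k : ℕ}
    (hζ : IsPrimitiveRoot ζ n) (hk : 1 ≤ k) (hkn : k ≤ n) {b : K} (hb : b ^ n ≠ 1) :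
    ∑ u ∈ nthRootsFinset n (1 : K), u ^ k / (u - b) = n * b ^ (k - 1) / (1 - b ^ n) := by
  have hn : 0 < n := by omega
  -- `1 / (u - b)` is a polynomial in `u` on the roots of unity, by the geometric series
  have hterm : ∀ u ∈ nthRootsFinset n (1 : K),
      u ^ k / (u - b) = (∑ j ∈ range n, b ^ (n - 1 - j) * u ^ (k + j)) / (1 - b ^ n) := by
    intro u hu
    rw [Polynomial.mem_nthRootsFinset hn] at hu
    have hub : u - b ≠ 0 := sub_ne_zero.mpr (by rintro rfl; exact hb hu)
    rw [div_eq_div_iff hub (sub_ne_zero.mpr hb.symm), ← hu, ← geom_sum₂_mul, ← mul_assoc,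
      mul_sum]
    exact congrArg (· * (u - b)) (sum_congr rfl fun j _ => by ring)
  have hdvd : ∀ j ∈ range n, n ∣ k + j ↔ j = n - k := by
    intro j hj
    rw [mem_range] at hj
    refine ⟨fun h => ?_, fun h => ⟨1, by omega⟩⟩
    have := Nat.eq_of_dvd_of_lt_two_mul (by omega) h (by omega)
    omega
  calc ∑ u ∈ nthRootsFinset n (1 : K), u ^ k / (u - b)
      = (∑ j ∈ range n, b ^ (n - 1 - j) * ∑ u ∈ nthRootsFinset n (1 : K), u ^ (k + j))
          / (1 - b ^ n) := by
        rw [sum_congr rfl hterm, ← sum_div, sum_comm]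
        simp only [mul_sum]
    _ = (∑ j ∈ range n, if j = n - k then b ^ (k - 1) * n else 0) / (1 - b ^ n) := by
        congr 1
        refine sum_congr rfl fun j hj => ?_
        rw [hζ.sum_pow_nthRootsFinset, if_congr (hdvd j hj) rfl rfl]
        split_ifs with h
        · rw [h, show n - 1 - (n - k) = k - 1 by omega]
        · rw [mul_zero]
    _ = n * b ^ (k - 1) / (1 - b ^ n) := by
        rw [sum_ite_eq', if_pos (mem_range.mpr (by omega)), mul_comm]

theorem coprime_iff_forall_eq_one_of_pow_eq_one {K : Type*} [Field K] [Fintype K] {r d : ℕ}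
    (hd : d ∣ Fintype.card K - 1) :
    r.Coprime d ↔ ∀ ζ : K, ζ ^ r = 1 → ζ ^ d = 1 → ζ = 1 := by
  refine ⟨fun hrd ζ hr hd => ?_, fun h => Nat.coprime_of_dvd fun p hp hpr hpd => ?_⟩
  · have := Nat.dvd_gcd (orderOf_dvd_of_pow_eq_one hr) (orderOf_dvd_of_pow_eq_one hd)
    rwa [hrd, Nat.dvd_one, orderOf_eq_one_iff] at this
  · have := Fact.mk hp
    classical
    obtain ⟨ζ, hζ⟩ := exists_prime_orderOf_dvd_card (G := Kˣ) p
      (by rw [Fintype.card_units]; exact hpd.trans hd)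
    have hpow : ∀ m, p ∣ m → (ζ : K) ^ m = 1 := fun m hm => by
      rw [← Units.val_pow_eq_pow_val, orderOf_dvd_iff_pow_eq_one.mp (hζ ▸ hm), Units.val_one]
    have hζ1 := Units.val_eq_one.mp (h _ (hpow r hpr) (hpow d hpd))
    exact hp.one_lt.ne' (by rw [← hζ, hζ1, orderOf_one])

section Criterion

variable {F : Type*} [Field F] [Fintype F] {d e r : ℕ}

theorem exists_ne_zero_pow_eq_of_pow_eq_one (hF : Fintype.card F = d * e + 1) {u : F}
    (hu : u ^ e = 1) : ∃ x : F, x ≠ 0 ∧ x ^ d = u := by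
  have he : e ≠ 0 := by rintro rfl; simpa using (hF ▸ Fintype.one_lt_card : 1 < d * 0 + 1)
  have hu0 : u ≠ 0 := by rintro rfl; simp [he] at hu
  obtain ⟨x, hx⟩ := IsCyclic.exists_pow_eq_of_pow_eq_one (G := Fˣ) (d := d) (e := e)
    (by rw [Nat.card_units, Nat.card_eq_fintype_card, hF, Nat.add_sub_cancel])
    (u := Units.mk0 u hu0) (Units.ext (by simpa using hu))
  exact ⟨x, x.ne_zero, by simpa using congrArg Units.val hx⟩

theorem pow_pow_eq_one_of_ne_zero (hF : Fintype.card F = d * e + 1) {x : F} (hx : x ≠ 0) :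
    (x ^ d) ^ e = 1 := by
  rw [← pow_mul, ← Nat.add_sub_cancel (d * e) 1, ← hF]
  exact FiniteField.pow_card_sub_one_eq_one x hx

theorem mapsTo_pow_mul_pow_of_ne_zero (hF : Fintype.card F = d * e + 1) {h : F → F}
    (hh : ∀ u : F, u ^ e = 1 → h u ≠ 0) :
    Set.MapsTo (fun u : F => u ^ r * h u ^ d) {u | u ^ e = 1} {u | u ^ e = 1} := by
  intro u (hu : u ^ e = 1)
  show (u ^ r * h u ^ d) ^ e = 1
  rw [mul_pow, pow_right_comm, hu, one_pow, one_mul]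
  exact pow_pow_eq_one_of_ne_zero hF (hh u hu)

theorem bijOn_pow_mul_pow_of_bijective (hF : Fintype.card F = d * e + 1) (hr : r ≠ 0)
    {h : F → F} (hg : Function.Bijective fun x : F => x ^ r * h (x ^ d)) :
    Set.BijOn (fun u : F => u ^ r * h u ^ d) {u | u ^ e = 1} {u | u ^ e = 1} := by
  have hg0 : ∀ x : F, x ≠ 0 → x ^ r * h (x ^ d) ≠ 0 := fun x hx h0 =>
    hx (hg.injective (h0.trans (by simp [hr])))
  have hψ : ∀ x : F, (x ^ d) ^ r * h (x ^ d) ^ d = (x ^ r * h (x ^ d)) ^ d := fun x => by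
    rw [mul_pow, pow_right_comm]
  have hmaps := mapsTo_pow_mul_pow_of_ne_zero (r := r) hF fun u hu => by
    obtain ⟨x, hx, rfl⟩ := exists_ne_zero_pow_eq_of_pow_eq_one hF hu
    exact right_ne_zero_of_mul (hg0 x hx)
  refine ((Set.toFinite _).surjOn_iff_bijOn_of_mapsTo hmaps).mp fun w (hw : w ^ e = 1) => ?_
  obtain ⟨z, hz, rfl⟩ := exists_ne_zero_pow_eq_of_pow_eq_one hF hw
  obtain ⟨x, rfl⟩ := hg.surjective z
  have hx : x ≠ 0 := by rintro rfl; simp [hr] at hz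
  exact ⟨x ^ d, pow_pow_eq_one_of_ne_zero hF hx, hψ x⟩

theorem bijective_of_coprime_of_bijOn (hF : Fintype.card F = d * e + 1) (hr : r ≠ 0)
    {h : F → F} (hrd : r.Coprime d)
    (hψ : Set.BijOn (fun u : F => u ^ r * h u ^ d) {u | u ^ e = 1} {u | u ^ e = 1}) :
    Function.Bijective fun x : F => x ^ r * h (x ^ d) := by
  have hd : d ≠ 0 := by rintro rfl; simpa using (hF ▸ Fintype.one_lt_card : 1 < 0 * e + 1)
  have he : e ≠ 0 := by rintro rfl; simpa using (hF ▸ Fintype.one_lt_card : 1 < d * 0 + 1)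
  have hψx : ∀ x : F, (x ^ d) ^ r * h (x ^ d) ^ d = (x ^ r * h (x ^ d)) ^ d := fun x => by
    rw [mul_pow, pow_right_comm]
  have hzero : ∀ x : F, x ^ r * h (x ^ d) = 0 ↔ x = 0 := fun x => by
    refine ⟨fun h0 => by_contra fun hx => ?_, by rintro rfl; simp [hr]⟩
    have := hψ.mapsTo (pow_pow_eq_one_of_ne_zero hF hx)
    simp only [Set.mem_ofPred_eq, hψx, h0, zero_pow hd, zero_pow he, zero_ne_one] at this
  refine Finite.injective_iff_bijective.mp fun x y (hxy : x ^ r * _ = y ^ r * _) => ?_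
  rcases eq_or_ne y 0 with rfl | hy
  · exact (hzero x).mp (hxy.trans ((hzero 0).mpr rfl))
  have hx : x ≠ 0 := fun hx => hy ((hzero y).mp (hxy ▸ (hzero x).mpr hx))
  have hxd : x ^ d = y ^ d := hψ.injOn (pow_pow_eq_one_of_ne_zero hF hx)
    (pow_pow_eq_one_of_ne_zero hF hy) (by simp only [hψx, hxy])
  have hxr : x ^ r = y ^ r := by
    rw [hxd] at hxy
    exact mul_right_cancel₀ (right_ne_zero_of_mul ((hzero y).not.mpr hy)) hxy
  rw [← div_eq_one_iff_eq hy]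
  refine (coprime_iff_forall_eq_one_of_pow_eq_one ⟨e, by rw [hF, Nat.add_sub_cancel]⟩).mp hrd _
    ?_ ?_ <;> rw [div_pow, div_eq_one_iff_eq (pow_ne_zero _ hy)]
  exacts [hxr, hxd]

theorem coprime_of_injective (hF : Fintype.card F = d * e + 1) {h : F → F}
    (hg : Function.Injective fun x : F => x ^ r * h (x ^ d)) : r.Coprime d :=
  (coprime_iff_forall_eq_one_of_pow_eq_one ⟨e, by rw [hF, Nat.add_sub_cancel]⟩).mpr
    fun ζ hζr hζd => hg (by simp only [hζr, hζd, one_pow])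

theorem bijective_pow_mul_comp_pow_iff (hF : Fintype.card F = d * e + 1) (hr : r ≠ 0)
    (h : F → F) :
    Function.Bijective (fun x : F => x ^ r * h (x ^ d)) ↔
      r.Coprime d ∧ Set.BijOn (fun u : F => u ^ r * h u ^ d) {u | u ^ e = 1} {u | u ^ e = 1} :=
  ⟨fun hg => ⟨coprime_of_injective hF hg.injective, bijOn_pow_mul_pow_of_bijective hF hr hg⟩,
    fun ⟨hrd, hψ⟩ => bijective_of_coprime_of_bijOn hF hr hrd hψ⟩

end Criterion

theorem Nat.sq_eq_sub_one_mul_add_one {q : ℕ} (hq : q ≠ 0) : q ^ 2 = (q - 1) * (q + 1) + 1 := by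
  obtain ⟨m, rfl⟩ : ∃ m, q = m + 1 := ⟨q - 1, by omega⟩
  rw [Nat.add_sub_cancel]
  ring

section SquareOrder

variable {F : Type*} [Field F] [Fintype F] {q r : ℕ}

theorem natCast_eq_zero_of_card_eq_sq (hF : Fintype.card F = q ^ 2) : (q : F) = 0 := by
  have h := FiniteField.cast_card_eq_zero F
  rw [hF, Nat.cast_pow] at h
  exact pow_eq_zero_iff two_ne_zero |>.mp h

theorem add_pow_eq_of_card_eq_sq (hq : IsPrimePow q) (hF : Fintype.card F = q ^ 2) (x y : F) :
    (x + y) ^ q = x ^ q + y ^ q := by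
  obtain ⟨p, k, hp, hk, rfl⟩ := hq
  rw [← Nat.prime_iff] at hp
  have := Fact.mk hp
  have hpF : (p : F) = 0 := by
    have h := natCast_eq_zero_of_card_eq_sq hF
    rw [Nat.cast_pow] at h
    exact pow_eq_zero_iff hk.ne' |>.mp h
  have := (CharP.charP_iff_prime_eq_zero hp).mpr hpF
  exact add_pow_char_pow x y p k

theorem neg_pow_succ_of_card_eq_sq (hq : IsPrimePow q) (hF : Fintype.card F = q ^ 2) (a : F) :
    (-a) ^ (q + 1) = a ^ (q + 1) := by
  have h := add_pow_eq_of_card_eq_sq hq hF 1 (-1)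
  rw [add_neg_cancel, one_pow, zero_pow hq.ne_zero] at h
  have hm1 : (-1 : F) ^ q = -1 := by linear_combination -h
  rw [neg_pow, pow_succ, hm1, neg_one_mul, neg_neg, one_mul]

theorem add_ne_zero_of_pow_succ_eq_one (hq : IsPrimePow q) (hF : Fintype.card F = q ^ 2)
    {a u : F} (ha : a ^ (q + 1) ≠ 1) (hu : u ^ (q + 1) = 1) : a + u ≠ 0 := fun h0 => ha (by
  rw [← neg_pow_succ_of_card_eq_sq hq hF, neg_eq_of_add_eq_zero_right h0, hu])

theorem pow_mul_add_pow_mul_add_eq (hq : IsPrimePow q) (hF : Fintype.card F = q ^ 2)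
    (hr : r ≠ 0) (a : F) {u : F} (hu : u ^ (q + 1) = 1) :
    u ^ r * (a + u) ^ (q - 1) * (a + u) = u ^ (r - 1) * (a ^ q * u + 1) := by
  rw [mul_assoc, pow_sub_one_mul hq.ne_zero, add_pow_eq_of_card_eq_sq hq hF,
    ← pow_sub_one_mul hr u]
  linear_combination u ^ (r - 1) * hu

theorem injOn_pow_mul_add_pow (hq : IsPrimePow q) (hF : Fintype.card F = q ^ 2) (hr : r ≠ 0)
    {a : F} (ha : a ^ (q + 1) ≠ 1) (hdvd : q + 1 ∣ r - 1) :
    Set.InjOn (fun u : F => u ^ r * (a + u) ^ (q - 1)) {u | u ^ (q + 1) = 1} := by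
  -- on the roots of unity the map is the Möbius transformation `u ↦ (a ^ q * u + 1) / (a + u)`
  have hmob : ∀ u : F, u ^ (q + 1) = 1 → u ^ r * (a + u) ^ (q - 1) * (a + u) = a ^ q * u + 1 :=
    fun u hu => by
      obtain ⟨m, hm⟩ := hdvd
      rw [pow_mul_add_pow_mul_add_eq hq hF hr a hu, hm, pow_mul, hu, one_pow, one_mul]
  intro u (hu : u ^ (q + 1) = 1) v (hv : v ^ (q + 1) = 1)
    (huv : u ^ r * (a + u) ^ (q - 1) = v ^ r * (a + v) ^ (q - 1))
  have hu' := hmob u hu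
  have hv' := hmob v hv
  rw [huv] at hu'
  set w := v ^ r * (a + v) ^ (q - 1)
  have hw : w ≠ a ^ q := fun hw => ha (by rw [pow_succ]; linear_combination hu' - (a + u) * hw)
  have : (w - a ^ q) * (u - v) = 0 := by linear_combination hu' - hv'
  exact sub_eq_zero.mp ((mul_eq_zero.mp this).resolve_left (sub_ne_zero.mpr hw))

theorem sum_pow_mul_add_pow_eq (hq : IsPrimePow q) (hF : Fintype.card F = q ^ 2) (hr : r ≠ 0)
    {ζ : F} (hζ : IsPrimitiveRoot ζ (q + 1)) {a : F} (ha : a ^ (q + 1) ≠ 1)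
    (hdvd : ¬q + 1 ∣ r - 1) :
    ∑ u ∈ nthRootsFinset (q + 1) (1 : F), u ^ r * (a + u) ^ (q - 1) =
      (-a) ^ ((r - 1) % (q + 1) - 1) := by
  set k := (r - 1) % (q + 1) with hk
  have hk1 : 1 ≤ k := Nat.pos_of_ne_zero fun h => hdvd (Nat.dvd_of_mod_eq_zero h)
  have hkq : k < q + 1 := Nat.mod_lt _ (by omega)
  have hterm : ∀ u ∈ nthRootsFinset (q + 1) (1 : F), u ^ r * (a + u) ^ (q - 1) =
      a ^ q * u ^ k + (1 - a ^ (q + 1)) * (u ^ k / (u - -a)) := by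
    intro u hu
    rw [Polynomial.mem_nthRootsFinset (by omega)] at hu
    have hau := add_ne_zero_of_pow_succ_eq_one hq hF ha hu
    have h := pow_mul_add_pow_mul_add_eq hq hF hr a hu
    rw [pow_eq_pow_mod (r - 1) hu, ← hk] at h
    rw [sub_neg_eq_add, add_comm u a]
    field_simp
    linear_combination h
  rw [sum_congr rfl hterm, sum_add_distrib, ← mul_sum, ← mul_sum, hζ.sum_pow_nthRootsFinset,
    if_neg (Nat.not_dvd_of_pos_of_lt hk1 hkq), hζ.sum_pow_div_sub hk1 hkq.le
      (by rwa [neg_pow_succ_of_card_eq_sq hq hF]), neg_pow_succ_of_card_eq_sq hq hF, Nat.cast_add,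
    natCast_eq_zero_of_card_eq_sq hF]
  field_simp
  ring

theorem bijOn_pow_mul_add_pow_iff (hq : IsPrimePow q) (hF : Fintype.card F = q ^ 2)
    (hr : r ≠ 0) {a : F} (ha : a ≠ 0) :
    Set.BijOn (fun u : F => u ^ r * (a + u) ^ (q - 1)) {u | u ^ (q + 1) = 1}
        {u | u ^ (q + 1) = 1} ↔ q + 1 ∣ r - 1 ∧ a ^ (q + 1) ≠ 1 := by
  have hq2 := hq.two_le
  have hF' := hF.trans (Nat.sq_eq_sub_one_mul_add_one hq.ne_zero)
  constructor
  · intro hψ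
    have ha1 : a ^ (q + 1) ≠ 1 := fun ha1 => by
      have := hψ.mapsTo (show (-a) ^ (q + 1) = 1 by rwa [neg_pow_succ_of_card_eq_sq hq hF])
      simp [zero_pow (Nat.sub_ne_zero_of_lt hq2)] at this
    refine ⟨by_contra fun hdvd => ?_, ha1⟩
    obtain ⟨ζ, hζ⟩ := exists_isPrimitiveRoot_of_dvd_card_units (K := F) (e := q + 1)
      ⟨q - 1, by
        rw [Nat.card_units, Nat.card_eq_fintype_card, hF', Nat.add_sub_cancel, mul_comm]⟩
    rw [← nthRootsFinset_toSet (by omega)] at hψ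
    have hsum := sum_nbij (f := fun u : F => u ^ r * (a + u) ^ (q - 1))
      (g := fun u : F => u ^ 1) _ (fun u hu => hψ.mapsTo hu) hψ.injOn hψ.surjOn
      (fun u _ => (pow_one _).symm)
    rw [sum_pow_mul_add_pow_eq hq hF hr hζ ha1 hdvd, hζ.sum_pow_nthRootsFinset,
      if_neg (Nat.not_dvd_of_pos_of_lt one_pos (by omega))] at hsum
    exact pow_ne_zero _ (neg_ne_zero.mpr ha) hsum
  · rintro ⟨hdvd, ha1⟩
    refine ((Set.toFinite _).injOn_iff_bijOn_of_mapsTo ?_).mp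
      (injOn_pow_mul_add_pow hq hF hr ha1 hdvd)
    exact mapsTo_pow_mul_pow_of_ne_zero hF' (h := (a + ·)) fun u hu =>
      add_ne_zero_of_pow_succ_eq_one hq hF ha1 hu

end SquareOrder

/-- `g(X) = X^r (a + X^{q-1})` is a permutation polynomial of `F_{q²}` iff
`gcd(r, q-1) = 1`, `(q+1) ∣ (r-1)`, and `a^{q+1} ≠ 1`. -/
theorem perm_iff_t_eq_one
    (q r : ℕ) (hq : IsPrimePow q) (hr : 1 ≤ r)
    (F : Type*) [Field F] [Fintype F] (hF : Fintype.card F = q ^ 2)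
    (a : F) (ha : a ≠ 0) :
    Function.Bijective (fun x : F => x ^ r * (a + x ^ (q - 1))) ↔
      (Nat.gcd r (q - 1) = 1 ∧ (q + 1) ∣ (r - 1) ∧ a ^ (q + 1) ≠ 1) := by
  rw [bijective_pow_mul_comp_pow_iff (hF.trans (Nat.sq_eq_sub_one_mul_add_one hq.ne_zero))
    (by omega) (a + ·), bijOn_pow_mul_add_pow_iff hq hF (by omega) ha, Nat.coprime_iff_gcd_eq_one]
end

section
/- Let q be a prime power, r ≥ 1 with gcd(r,q-1)=1 and (q+1) | (r-1), and a ∈ F_{q^2}^* with a^{q+1} ≠ 1. Then for every integer s with 1 ≤ s ≤ q^2 - 2, the power sum ∑_{x ∈ F_{q^2}} (x^r(a + x^{q-1}))^s equals 0. -/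
/-!
If `(q - 1) ∤ s`, scaling `x` by an element `c` of order `q - 1` multiplies each summand by
`c ^ (r * s) ≠ 1`, so the sum vanishes. If `(q - 1) ∣ s`, then `(q + 1) ∣ (r - 1)` makes
`x ^ (r * s) = x ^ s`, so the summand is `(x ^ q + a * x) ^ s`. The map `x ↦ x ^ q + a * x` is
additive, and a nonzero root `x` would give `x = x ^ (q ^ 2) = a ^ (q + 1) * x`; hence it permutes
`F` and the sum is the power sum `∑ y ^ s = 0`.
-/

open Finset

theorem IsCyclic.exists_orderOf_eq_of_dvd_natCard {G : Type*} [Group G] [Finite G] [IsCyclic G]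
    {n : ℕ} (hn : n ∣ Nat.card G) : ∃ g : G, orderOf g = n := by
  obtain ⟨g, hg⟩ := IsCyclic.exists_ofOrder_eq_natCard (α := G)
  exact ⟨g ^ (Nat.card G / n), hg ▸ orderOf_pow_orderOf_div (hg ▸ Nat.card_pos.ne') (hg ▸ hn)⟩

theorem Finset.sum_eq_zero_of_map_mul_eq_mul {G R : Type*} [GroupWithZero G] [Fintype G]
    [Ring R] [NoZeroDivisors R] (f : G → R) {c : G} {d : R} (hc : c ≠ 0) (hd : d ≠ 1)
    (h : ∀ x, f (c * x) = d * f x) : ∑ x, f x = 0 := by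
  have hfix : d * ∑ x, f x = ∑ x, f x := calc
    d * ∑ x, f x = ∑ x, f (c * x) := by rw [mul_sum]; exact sum_congr rfl fun x _ => (h x).symm
    _ = ∑ x, f x := Equiv.sum_comp (Equiv.mulLeft₀ c hc) f
  have : (d - 1) * ∑ x, f x = 0 := by rw [sub_mul, one_mul, hfix, sub_self]
  exact (mul_eq_zero.mp this).resolve_left (sub_ne_zero.mpr hd)

namespace FiniteField

variable {K : Type*} [Field K] [Fintype K]

theorem exists_ringHom_eq_pow_of_dvd_card {q : ℕ} (hq : q ∣ Fintype.card K) :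
    ∃ φ : K →+* K, ∀ x, φ x = x ^ q := by
  obtain ⟨N, hp, hcard⟩ := FiniteField.card K (ringChar K)
  obtain ⟨m, -, rfl⟩ := (Nat.dvd_prime_pow hp).mp (hcard ▸ hq)
  have : Fact (ringChar K).Prime := ⟨hp⟩
  exact ⟨iterateFrobenius K (ringChar K) m, fun _ => rfl⟩

theorem pow_add_card_sub_one_mul (x : K) {j : ℕ} (hj : j ≠ 0) (i : ℕ) :
    x ^ (j + (Fintype.card K - 1) * i) = x ^ j := by
  rcases eq_or_ne x 0 with rfl | hx
  · rw [zero_pow hj, zero_pow (by omega)]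
  · rw [pow_add, pow_mul, pow_card_sub_one_eq_one x hx, one_pow, mul_one]

end FiniteField

section

variable {F : Type*} [Field F] [Fintype F]

theorem sum_pow_mul_eq_zero_of_not_dvd {n r s : ℕ} (hn : n ∣ Fintype.card F - 1)
    (hr : r.Coprime n) (hs : ¬ n ∣ s) (f : F → F) (hf : ∀ c x, c ^ n = 1 → f (c * x) = f x) :
    ∑ x, (x ^ r * f x) ^ s = 0 := by
  obtain ⟨c, hc⟩ := IsCyclic.exists_orderOf_eq_of_dvd_natCard (G := Fˣ) (n := n)
    (by rwa [Nat.card_units, Nat.card_eq_fintype_card])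
  rw [← orderOf_units] at hc
  have hcn : (c : F) ^ n = 1 := hc ▸ pow_orderOf_eq_one _
  refine sum_eq_zero_of_map_mul_eq_mul _ c.ne_zero (d := (c : F) ^ (r * s)) ?_ fun x => ?_
  · rw [Ne, ← orderOf_dvd_iff_pow_eq_one, hc]
    exact fun h => hs (hr.symm.dvd_of_dvd_mul_left h)
  · rw [hf _ _ hcn, mul_pow, pow_mul]; ring

variable {q : ℕ}

theorem bijective_pow_add_mul (hF : Fintype.card F = q ^ 2) {a : F} (ha : a ^ (q + 1) ≠ 1) :
    Function.Bijective fun x : F => x ^ q + a * x := by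
  obtain ⟨φ, hφ⟩ :=
    FiniteField.exists_ringHom_eq_pow_of_dvd_card (hF ▸ dvd_pow_self q two_ne_zero)
  let L : F →+ F := φ.toAddMonoidHom + AddMonoidHom.mulLeft a
  have hL : ∀ x, L x = x ^ q + a * x := fun x => by simp [L, hφ]
  suffices Function.Injective L by
    rw [← Finite.injective_iff_bijective]; simpa only [← funext hL]
  refine (injective_iff_map_eq_zero L).mpr fun x hx => ?_
  rw [hL, add_eq_zero_iff_eq_neg] at hx
  have hfix : x = a ^ (q + 1) * x := calc
    x = (x ^ q) ^ q := by rw [← pow_mul, ← sq, ← hF, FiniteField.pow_card]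
    _ = a ^ (q + 1) * x := by rw [hx, ← hφ, map_neg, map_mul, hφ, hφ, hx]; ring
  have : (a ^ (q + 1) - 1) * x = 0 := by rw [sub_mul, one_mul, ← hfix, sub_self]
  exact (mul_eq_zero.mp this).resolve_left (sub_ne_zero.mpr ha)

theorem sum_pow_eq_zero_of_sub_one_dvd (hF : Fintype.card F = q ^ 2) {a : F} (ha : a ^ (q + 1) ≠ 1)
    {r s : ℕ} (hr : 1 ≤ r) (hrq : (q + 1) ∣ (r - 1)) (hs : (q - 1) ∣ s) (hs0 : s ≠ 0)
    (hsq : s < q ^ 2 - 1) : ∑ x : F, (x ^ r * (a + x ^ (q - 1))) ^ s = 0 := by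
  have hq : 1 ≤ q := Nat.pos_of_ne_zero fun h => by simp [h] at hF
  obtain ⟨m, hm⟩ := hrq
  obtain ⟨k, rfl⟩ := hs
  have hrs : r * ((q - 1) * k) = (q - 1) * k + (Fintype.card F - 1) * (m * k) := by
    obtain ⟨t, rfl⟩ : ∃ t, q = t + 1 := ⟨q - 1, by omega⟩
    obtain ⟨r, rfl⟩ : ∃ r', r = r' + 1 := ⟨r - 1, by omega⟩
    simp only [Nat.add_sub_cancel] at hm ⊢
    have : (t + 1) ^ 2 - 1 = t * (t + 2) := by rw [Nat.sub_eq_of_eq_add]; ring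
    rw [hF, this, hm]; ring
  have hsummand : ∀ x : F, (x ^ r * (a + x ^ (q - 1))) ^ ((q - 1) * k)
      = (x ^ q + a * x) ^ ((q - 1) * k) := fun x => by
    rw [mul_pow, ← pow_mul, hrs, FiniteField.pow_add_card_sub_one_mul x hs0, ← mul_pow]
    congr 1
    rw [mul_add, ← pow_succ', Nat.sub_add_cancel hq]; ring
  rw [sum_congr rfl fun x _ => hsummand x, (bijective_pow_add_mul hF ha).sum_comp (· ^ _)]
  exact FiniteField.sum_pow_lt_card_sub_one F _ (hF.symm ▸ hsq)

end

theorem power_sums_vanish_t_eq_one_general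
    (q r : ℕ) (hr : 1 ≤ r)
    (hgcd : Nat.gcd r (q - 1) = 1) (hdvd : (q + 1) ∣ (r - 1))
    (F : Type*) [Field F] [Fintype F] (hF : Fintype.card F = q ^ 2)
    (a : F) (ha1 : a ^ (q + 1) ≠ 1) :
    ∀ s : ℕ, 1 ≤ s → s ≤ q ^ 2 - 2 →
      ∑ x : F, (x ^ r * (a + x ^ (q - 1))) ^ s = 0 := by
  intro s hs1 hs2
  by_cases hs : (q - 1) ∣ s
  · exact sum_pow_eq_zero_of_sub_one_dvd hF ha1 hr hdvd hs (by omega) (by omega)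
  · refine sum_pow_mul_eq_zero_of_not_dvd ?_ hgcd hs _ fun c x hc => ?_
    · exact hF ▸ Nat.sub_one_dvd_pow_sub_one q 2
    · rw [mul_pow, hc, one_mul]

/-- If `gcd(r, q-1) = 1`, `(q+1) ∣ (r-1)` and `a^{q+1} ≠ 1`, then all power sums
`∑_{x ∈ F_{q²}} (x^r (a + x^{q-1}))^s` with `1 ≤ s ≤ q² - 2` vanish. -/
theorem power_sums_vanish_t_eq_one
    (q r : ℕ) (hq : IsPrimePow q) (hr : 1 ≤ r)
    (hgcd : Nat.gcd r (q - 1) = 1) (hdvd : (q + 1) ∣ (r - 1))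
    (F : Type*) [Field F] [Fintype F] (hF : Fintype.card F = q ^ 2)
    (a : F) (ha : a ≠ 0) (ha1 : a ^ (q + 1) ≠ 1) :
    ∀ s : ℕ, 1 ≤ s → s ≤ q ^ 2 - 2 →
      ∑ x : F, (x ^ r * (a + x ^ (q - 1))) ^ s = 0 :=
  power_sums_vanish_t_eq_one_general q r hr hgcd hdvd F hF a ha1
end

section
/- Let q be a prime power, t ≥ 1, r ≥ 1, and a ∈ F_{q^2}^*. If (-a)^{(q+1)/gcd(q+1,t)} = 1, then f(X) = X^r(a + X^{t(q-1)}) has at least two distinct roots in F_{q^2}, and hence f is not a permutation polynomial of F_{q^2}. -/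
/-!
`0` is a root of `f` because `r ≥ 1`, so it suffices to find a nonzero root, i.e. `x ≠ 0` with
`x ^ (t (q - 1)) = -a`. In the cyclic group of order `N = q² - 1`, the `d`-th powers are exactly
the kernel of `y ↦ y ^ (N / gcd(N, d))` (the former lies in the latter and both have that many
elements), and for `d = t (q - 1)` this exponent is `(q + 1) / gcd(q + 1, t)`.
-/

theorem IsCyclic.range_powMonoidHom_eq_ker {G : Type*} [CommGroup G] [IsCyclic G] [Finite G]
    (d : ℕ) :
    (powMonoidHom d : G →* G).range = (powMonoidHom (Nat.card G / (Nat.card G).gcd d)).ker := by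
  set N := Nat.card G
  have hgcd : N.gcd d ∣ N := Nat.gcd_dvd_left N d
  refine Subgroup.eq_of_le_of_card_ge ?_ ?_
  · rintro _ ⟨x, rfl⟩
    have hexp : d * (N / N.gcd d) = N * (d / N.gcd d) := by
      rw [← Nat.mul_div_assoc _ hgcd, mul_comm, Nat.mul_div_assoc _ (Nat.gcd_dvd_right N d)]
    rw [MonoidHom.mem_ker, powMonoidHom_apply, powMonoidHom_apply, ← pow_mul, hexp, pow_mul,
      pow_card_eq_one', one_pow]
  · rw [IsCyclic.card_powMonoidHom_ker, IsCyclic.card_powMonoidHom_range,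
      Nat.gcd_eq_right (Nat.div_dvd_of_dvd hgcd)]

theorem IsCyclic.exists_pow_eq_of_pow_card_div_gcd_eq_one {G : Type*} [CommGroup G] [IsCyclic G]
    [Finite G] {d : ℕ} {b : G} (hb : b ^ (Nat.card G / (Nat.card G).gcd d) = 1) :
    ∃ x : G, x ^ d = b :=
  (IsCyclic.range_powMonoidHom_eq_ker d).ge hb

theorem Nat.sq_sub_one_div_gcd_mul_sub_one {q : ℕ} (hq : 1 < q) (t : ℕ) :
    (q ^ 2 - 1) / (q ^ 2 - 1).gcd (t * (q - 1)) = (q + 1) / (q + 1).gcd t := by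
  have hfactor : q ^ 2 - 1 = (q - 1) * (q + 1) := by
    rw [mul_comm, ← Nat.sq_sub_sq, one_pow]
  rw [hfactor, mul_comm t, Nat.gcd_mul_left, Nat.mul_div_mul_left _ _ (Nat.sub_pos_of_lt hq)]

theorem FiniteField.exists_ne_zero_pow_mul_sub_one_eq {F : Type*} [Field F] [Fintype F] {q : ℕ}
    (hF : Fintype.card F = q ^ 2) (t : ℕ) {b : F} (hb0 : b ≠ 0)
    (hb : b ^ ((q + 1) / (q + 1).gcd t) = 1) :
    ∃ x : F, x ≠ 0 ∧ x ^ (t * (q - 1)) = b := by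
  have hq : 1 < q := by
    have := Fintype.one_lt_card (α := F)
    rw [hF] at this
    exact (Nat.one_lt_pow_iff two_ne_zero).mp this
  have hcard : Nat.card Fˣ = q ^ 2 - 1 := by
    rw [Nat.card_units, Nat.card_eq_fintype_card, hF]
  obtain ⟨x, hx⟩ := IsCyclic.exists_pow_eq_of_pow_card_div_gcd_eq_one (d := t * (q - 1))
    (b := Units.mk0 b hb0) (by
      rw [hcard, Nat.sq_sub_one_div_gcd_mul_sub_one hq]
      ext; simpa using hb)
  exact ⟨x, x.ne_zero, by simpa using congrArg Units.val hx⟩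

theorem not_perm_of_neg_a_power_one_general
    (q r t : ℕ) (hr : 1 ≤ r)
    (F : Type*) [Field F] [Fintype F] (hF : Fintype.card F = q ^ 2)
    (a : F) (ha : a ≠ 0)
    (h : (-a) ^ ((q + 1) / Nat.gcd (q + 1) t) = 1) :
    (∃ x y : F, x ≠ y ∧ x ^ r * (a + x ^ (t * (q - 1))) = 0 ∧
      y ^ r * (a + y ^ (t * (q - 1))) = 0) ∧
    ¬ Function.Bijective (fun x : F => x ^ r * (a + x ^ (t * (q - 1)))) := by
  obtain ⟨x, hx0, hx⟩ := FiniteField.exists_ne_zero_pow_mul_sub_one_eq hF t (neg_ne_zero.mpr ha) h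
  have hroot_zero : (0 : F) ^ r * (a + 0 ^ (t * (q - 1))) = 0 := by
    rw [zero_pow (by omega), zero_mul]
  have hroot_x : x ^ r * (a + x ^ (t * (q - 1))) = 0 := by
    rw [hx, add_neg_cancel, mul_zero]
  refine ⟨⟨0, x, hx0.symm, hroot_zero, hroot_x⟩, fun hbij => hx0 ?_⟩
  exact hbij.injective (hroot_x.trans hroot_zero.symm)

/-- If `(-a)^((q+1)/gcd(q+1,t)) = 1`, then `f(X) = X^r (a + X^{t(q-1)})` has at least
two distinct roots in `F_{q²}`, hence is not a permutation polynomial of `F_{q²}`. -/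
theorem not_perm_of_neg_a_power_one
    (q r t : ℕ) (hq : IsPrimePow q) (hr : 1 ≤ r) (ht : 1 ≤ t)
    (F : Type*) [Field F] [Fintype F] (hF : Fintype.card F = q ^ 2)
    (a : F) (ha : a ≠ 0)
    (h : (-a) ^ ((q + 1) / Nat.gcd (q + 1) t) = 1) :
    (∃ x y : F, x ≠ y ∧ x ^ r * (a + x ^ (t * (q - 1))) = 0 ∧
      y ^ r * (a + y ^ (t * (q - 1))) = 0) ∧
    ¬ Function.Bijective (fun x : F => x ^ r * (a + x ^ (t * (q - 1)))) :=
  not_perm_of_neg_a_power_one_general q r t hr F hF a ha h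
end

section
/- For every odd positive integer α, the rational-number identity ∑_{i=0}^{α} C(α,i)(-1)^i [ C(i + (α-1)/2, α)(1/3)^{2i} + C(i + α/2, α)(1/3)^{2i+1} ] = 0 holds, where C(x, α) for rational x denotes the generalized binomial coefficient x(x-1)⋯(x-α+1)/α!. -/
/-!
Write `α = 2m + 1`. Expanding `C(i + c, α)` by Vandermonde's identity and summing the binomial
series in `i` turns the sum into `(-1/9)^α · ∑_r C(α, r) (-8)^r (C(m, r) + C(m + 1/2, r) / 3)`.
Creative telescoping shows that both sums over `r`, as functions of `m`, satisfy the same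
second-order recurrence with nonvanishing leading coefficient; their combination vanishes for
`m = 0, 1`, hence for all `m`.
-/

/-- Generalized binomial coefficient `C(x, n) = x(x-1)⋯(x-n+1)/n!` for `x ∈ ℚ`. -/
noncomputable def gchoose (x : ℚ) (n : ℕ) : ℚ :=
  (descPochhammer ℚ n).eval x / (n.factorial : ℚ)

open Finset

theorem gchoose_eq_ringChoose (x : ℚ) (n : ℕ) : gchoose x n = Ring.choose x n := by
  have h : (descPochhammer ℤ n).smeval x = (descPochhammer ℚ n).eval x := by
    rw [Polynomial.descPochhammer_smeval_eq_ascPochhammer,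
      Polynomial.ascPochhammer_smeval_eq_eval, descPochhammer_eval_eq_ascPochhammer]
  rw [gchoose, ← h, Ring.descPochhammer_eq_factorial_smul_choose, nsmul_eq_mul]
  field_simp

theorem gchoose_natCast (n r : ℕ) : gchoose n r = n.choose r := by
  rw [gchoose_eq_ringChoose, Ring.choose_natCast]

theorem gchoose_natCast_of_lt {n r : ℕ} (h : n < r) : gchoose n r = 0 := by
  rw [gchoose_natCast, Nat.choose_eq_zero_of_lt h, Nat.cast_zero]

theorem gchoose_zero_right (x : ℚ) : gchoose x 0 = 1 := by
  simp [gchoose]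

theorem gchoose_succ_right (x : ℚ) (r : ℕ) :
    gchoose x (r + 1) = gchoose x r * (x - r) / (r + 1) := by
  rw [gchoose, gchoose, descPochhammer_succ_eval, Nat.factorial_succ]
  push_cast
  field_simp

theorem gchoose_eq_of_eq_add_one {x y : ℚ} (hxy : y = x + 1) (hy : y ≠ 0) (r : ℕ) :
    gchoose x r = gchoose y r * (y - r) / y := by
  subst hxy
  have key : (x + 1) * (descPochhammer ℚ r).eval x
      = (descPochhammer ℚ r).eval (x + 1) * (x + 1 - r) := by
    rw [← descPochhammer_succ_eval, descPochhammer_succ_left]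
    simp [Polynomial.eval_comp]
  rw [gchoose, gchoose, eq_div_iff hy, div_mul_eq_mul_div, div_mul_eq_mul_div, mul_comm, key]

theorem gchoose_natCast_add (i : ℕ) (c : ℚ) (n : ℕ) :
    gchoose (i + c) n = ∑ k ∈ range (n + 1), (i.choose k : ℚ) * gchoose c (n - k) := by
  rw [gchoose_eq_ringChoose, Ring.add_choose_eq n (Commute.all _ _),
    Nat.sum_antidiagonal_eq_sum_range_succ_mk]
  refine sum_congr rfl fun k _ => ?_
  rw [Ring.choose_natCast, gchoose_eq_ringChoose]

theorem sum_choose_mul_choose_mul_pow {R : Type*} [CommSemiring R] (n k : ℕ) (t : R) :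
    ∑ i ∈ range (n + 1), (n.choose i : R) * i.choose k * t ^ i
      = n.choose k * t ^ k * (1 + t) ^ (n - k) := by
  rcases lt_or_ge n k with hnk | hkn
  · rw [Nat.choose_eq_zero_of_lt hnk, Nat.cast_zero, zero_mul, zero_mul]
    refine sum_eq_zero fun i hi => ?_
    have hik : i < k := (Nat.lt_succ_iff.mp (mem_range.mp hi)).trans_lt hnk
    rw [Nat.choose_eq_zero_of_lt hik, Nat.cast_zero, mul_zero, zero_mul]
  have below : ∑ i ∈ range k, (n.choose i : R) * i.choose k * t ^ i = 0 :=
    sum_eq_zero fun i hi => by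
      rw [Nat.choose_eq_zero_of_lt (mem_range.mp hi), Nat.cast_zero, mul_zero, zero_mul]
  rw [show n + 1 = k + (n - k + 1) by omega, sum_range_add, below, zero_add,
    add_comm 1 t, add_pow, mul_sum]
  refine sum_congr rfl fun j _ => ?_
  have h := Nat.choose_mul (n := n) (Nat.le_add_right k j)
  rw [Nat.add_sub_cancel_left] at h
  rw [pow_add, one_pow, mul_one, ← Nat.cast_mul, h, Nat.cast_mul]
  ring

theorem sum_choose_mul_pow_mul_gchoose_natCast_add (N : ℕ) {t : ℚ} (ht : t ≠ 0) (c : ℚ) :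
    ∑ i ∈ range (N + 1), (N.choose i : ℚ) * t ^ i * gchoose (i + c) N
      = t ^ N * ∑ j ∈ range (N + 1), (N.choose j : ℚ) * ((1 + t) / t) ^ j * gchoose c j := by
  simp_rw [gchoose_natCast_add, mul_sum]
  rw [sum_comm, ← sum_range_reflect]
  refine sum_congr rfl fun j hj => ?_
  have hjN : j ≤ N := Nat.lt_succ_iff.mp (mem_range.mp hj)
  have inner := sum_choose_mul_choose_mul_pow N (N - j) t
  rw [Nat.sub_sub_self hjN, Nat.choose_symm hjN] at inner
  rw [show N + 1 - 1 - j = N - j by omega, Nat.sub_sub_self hjN]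
  have hpow : t ^ (N - j) * (1 + t) ^ j = t ^ N * ((1 + t) / t) ^ j := by
    rw [div_pow, ← Nat.sub_add_cancel hjN, pow_add, Nat.add_sub_cancel]
    field_simp
  calc ∑ i ∈ range (N + 1), (N.choose i : ℚ) * t ^ i * (i.choose (N - j) * gchoose c j)
      = (∑ i ∈ range (N + 1), (N.choose i : ℚ) * i.choose (N - j) * t ^ i) * gchoose c j := by
        rw [sum_mul]; exact sum_congr rfl fun i _ => by ring
    _ = _ := by rw [inner, mul_assoc (N.choose j : ℚ), hpow]; ring

def annihilator (f : ℚ → ℚ) (x : ℚ) : ℚ :=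
  (2 * x + 5) * (x + 2) * f (x + 2) + 3 * (36 * x ^ 2 + 126 * x + 113) * f (x + 1)
    + 729 * (2 * x + 3) * (x + 1) * f x

theorem annihilator_sum (s : Finset ℕ) (f : ℕ → ℚ → ℚ) (x : ℚ) :
    annihilator (fun y => ∑ r ∈ s, f r y) x = ∑ r ∈ s, annihilator (f r) x := by
  simp only [annihilator, mul_sum, ← sum_add_distrib]

noncomputable def reducedTerm (c x : ℚ) (r : ℕ) : ℚ :=
  gchoose (2 * x + 1) r * (-8) ^ r * gchoose (x + c) r

-- Zeilberger's algorithm produces `annihilator` together with these certificates.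

noncomputable def certificateZero (x : ℚ) (r : ℕ) : ℚ :=
  (r ^ 2 * (-784 * x ^ 4 - 6216 * x ^ 3 - 18245 * x ^ 2 - 23469 * x - 11142)
    + r ^ 3 * (1848 * x ^ 3 + 10954 * x ^ 2 + 21306 * x + 13577)
    + r ^ 4 * (-1593 * x ^ 2 - 6267 * x - 6051)
    + r ^ 5 * (594 * x + 1161) - 81 * r ^ 6) / (4 * (x + 1) * (x + 2) ^ 2 * (2 * x + 5))
    * gchoose (2 * x + 5) r * gchoose (x + 2) r * (-8) ^ r

noncomputable def certificateHalf (x : ℚ) (r : ℕ) : ℚ :=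
  (r ^ 2 * (-3136 * x ^ 4 - 26432 * x ^ 3 - 82388 * x ^ 2 - 112312 * x - 56355)
    + r ^ 3 * (7392 * x ^ 3 + 46056 * x ^ 2 + 94152 * x + 63018)
    + r ^ 4 * (-6372 * x ^ 2 - 26160 * x - 26379)
    + r ^ 5 * (2376 * x + 4824) - 324 * r ^ 6) / (4 * (x + 2) * (2 * x + 3) * (2 * x + 5) ^ 2)
    * gchoose (2 * x + 5) r * gchoose (x + 5 / 2) r * (-8) ^ r

theorem annihilator_reducedTerm_zero {x : ℚ} (hx : 0 ≤ x) (r : ℕ) :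
    annihilator (fun y => reducedTerm 0 y r) x
      = certificateZero x (r + 1) - certificateZero x r := by
  have e4 := gchoose_eq_of_eq_add_one (x := 2 * x + 4) (y := 2 * x + 5) (by ring) (by positivity) r
  have e3 := gchoose_eq_of_eq_add_one (x := 2 * x + 3) (y := 2 * x + 4) (by ring) (by positivity) r
  have e2 := gchoose_eq_of_eq_add_one (x := 2 * x + 2) (y := 2 * x + 3) (by ring) (by positivity) r
  have e1 := gchoose_eq_of_eq_add_one (x := 2 * x + 1) (y := 2 * x + 2) (by ring) (by positivity) r
  have f1 := gchoose_eq_of_eq_add_one (x := x + 1) (y := x + 2) (by ring) (by positivity) r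
  have f0 := gchoose_eq_of_eq_add_one (x := x) (y := x + 1) rfl (by positivity) r
  simp only [annihilator, reducedTerm, certificateZero, add_zero]
  rw [show 2 * (x + 2) + 1 = 2 * x + 5 by ring, show 2 * (x + 1) + 1 = 2 * x + 3 by ring]
  rw [e1, e2, e3, e4, f0, f1, gchoose_succ_right, gchoose_succ_right, pow_succ]
  push_cast
  field_simp
  ring

theorem annihilator_reducedTerm_half {x : ℚ} (hx : 0 ≤ x) (r : ℕ) :
    annihilator (fun y => reducedTerm (1 / 2) y r) x
      = certificateHalf x (r + 1) - certificateHalf x r := by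
  have e4 := gchoose_eq_of_eq_add_one (x := 2 * x + 4) (y := 2 * x + 5) (by ring) (by positivity) r
  have e3 := gchoose_eq_of_eq_add_one (x := 2 * x + 3) (y := 2 * x + 4) (by ring) (by positivity) r
  have e2 := gchoose_eq_of_eq_add_one (x := 2 * x + 2) (y := 2 * x + 3) (by ring) (by positivity) r
  have e1 := gchoose_eq_of_eq_add_one (x := 2 * x + 1) (y := 2 * x + 2) (by ring) (by positivity) r
  have f1 := gchoose_eq_of_eq_add_one (x := x + 3 / 2) (y := x + 5 / 2) (by ring) (by positivity) r
  have f0 := gchoose_eq_of_eq_add_one (x := x + 1 / 2) (y := x + 3 / 2) (by ring) (by positivity) r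
  simp only [annihilator, reducedTerm, certificateHalf]
  rw [show x + 2 + 1 / 2 = x + 5 / 2 by ring, show x + 1 + 1 / 2 = x + 3 / 2 by ring,
    show 2 * (x + 2) + 1 = 2 * x + 5 by ring, show 2 * (x + 1) + 1 = 2 * x + 3 by ring]
  rw [e1, e2, e3, e4, f0, f1, gchoose_succ_right, gchoose_succ_right, pow_succ]
  push_cast
  field_simp
  ring

noncomputable def reducedSum (M : ℕ) (x : ℚ) : ℚ :=
  ∑ r ∈ range M, (reducedTerm 0 x r + reducedTerm (1 / 2) x r / 3)

theorem reducedSum_natCast_of_le {n M : ℕ} (h : 2 * n + 2 ≤ M) :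
    reducedSum M n = reducedSum (2 * n + 2) n := by
  refine (sum_subset (range_subset_range.mpr h) fun r _ hr => ?_).symm
  have hz : gchoose (2 * (n : ℚ) + 1) r = 0 := by
    exact_mod_cast gchoose_natCast_of_lt (n := 2 * n + 1) (by simp at hr; omega)
  simp [reducedTerm, hz]

theorem annihilator_reducedSum (m : ℕ) : annihilator (reducedSum (2 * m + 6)) m = 0 := by
  set G : ℕ → ℚ := fun r => certificateZero m r + certificateHalf m r / 3
  have telescope : ∀ r ∈ range (2 * m + 6),
      annihilator (fun y => reducedTerm 0 y r + reducedTerm (1 / 2) y r / 3) m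
        = G (r + 1) - G r := by
    intro r _
    have h0 := annihilator_reducedTerm_zero (Nat.cast_nonneg m) r
    have h1 := annihilator_reducedTerm_half (Nat.cast_nonneg m) r
    simp only [annihilator] at h0 h1 ⊢
    linear_combination h0 + h1 / 3
  have top : gchoose (2 * (m : ℚ) + 5) (2 * m + 6) = 0 := by
    exact_mod_cast gchoose_natCast_of_lt (n := 2 * m + 5) (by omega)
  unfold reducedSum
  rw [annihilator_sum, sum_congr rfl telescope, sum_range_sub]
  simp [G, certificateZero, certificateHalf, top]

theorem eq_zero_of_recurrence {R : Type*} [Semiring R] [NoZeroDivisors R] {a b c u : ℕ → R}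
    (ha : ∀ n, a n ≠ 0) (hrec : ∀ n, a n * u (n + 2) + b n * u (n + 1) + c n * u n = 0)
    (h0 : u 0 = 0) (h1 : u 1 = 0) (n : ℕ) : u n = 0 := by
  induction n using Nat.twoStepInduction with
  | zero => exact h0
  | one => exact h1
  | more n ih0 ih1 =>
    have h := hrec n
    rw [ih0, ih1, mul_zero, mul_zero, add_zero, add_zero] at h
    exact (mul_eq_zero.mp h).resolve_left (ha n)

theorem reducedSum_natCast_eq_zero (m : ℕ) : reducedSum (2 * m + 2) m = 0 := by
  refine eq_zero_of_recurrence (u := fun n => reducedSum (2 * n + 2) n)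
    (a := fun n => ((2 * n + 5) * (n + 2) : ℚ)) (b := fun n => 3 * (36 * n ^ 2 + 126 * n + 113))
    (c := fun n => 729 * (2 * n + 3) * (n + 1)) (fun n => by positivity) (fun n => ?_) ?_ ?_ m
  · have h := annihilator_reducedSum n
    rw [annihilator] at h
    rw [← reducedSum_natCast_of_le (n := n + 2) (M := 2 * n + 6) (by omega),
      ← reducedSum_natCast_of_le (n := n + 1) (M := 2 * n + 6) (by omega),
      ← reducedSum_natCast_of_le (n := n) (M := 2 * n + 6) (by omega)]
    simpa [Nat.cast_add, Nat.cast_ofNat] using h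
  · norm_num [reducedSum, reducedTerm, sum_range_succ, gchoose_succ_right, gchoose_zero_right]
  · norm_num [reducedSum, reducedTerm, sum_range_succ, gchoose_succ_right, gchoose_zero_right]

theorem identity_z_eq_third_general (α : ℕ) (hodd : Odd α) :
    ∑ i ∈ Finset.range (α + 1), (α.choose i : ℚ) * (-1) ^ i *
      (gchoose ((i : ℚ) + ((α : ℚ) - 1) / 2) α * (1 / 3 : ℚ) ^ (2 * i) +
        gchoose ((i : ℚ) + (α : ℚ) / 2) α * (1 / 3 : ℚ) ^ (2 * i + 1)) = 0 := by
  obtain ⟨m, rfl⟩ := hodd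
  set N := 2 * m + 1
  have hN : (N : ℚ) = 2 * m + 1 := by push_cast [N]; ring
  have split : ∀ i ∈ range (N + 1), (N.choose i : ℚ) * (-1) ^ i *
      (gchoose ((i : ℚ) + ((N : ℚ) - 1) / 2) N * (1 / 3 : ℚ) ^ (2 * i) +
        gchoose ((i : ℚ) + (N : ℚ) / 2) N * (1 / 3 : ℚ) ^ (2 * i + 1))
      = N.choose i * (-1 / 9) ^ i * gchoose (i + m) N
        + N.choose i * (-1 / 9) ^ i * gchoose (i + (m + 1 / 2)) N / 3 := by
    intro i _
    rw [hN, show (-1 / 9 : ℚ) = -1 * (1 / 3) ^ 2 by norm_num, mul_pow, ← pow_mul]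
    ring_nf
  have h := reducedSum_natCast_eq_zero m
  simp only [reducedSum, reducedTerm, add_zero, sum_add_distrib, ← sum_div, ← hN,
    gchoose_natCast N] at h
  rw [sum_congr rfl split, sum_add_distrib, ← sum_div,
    sum_choose_mul_pow_mul_gchoose_natCast_add N (by norm_num : (-1 / 9 : ℚ) ≠ 0),
    sum_choose_mul_pow_mul_gchoose_natCast_add N (by norm_num : (-1 / 9 : ℚ) ≠ 0),
    show (1 + -1 / 9 : ℚ) / (-1 / 9) = -8 by norm_num, show N + 1 = 2 * m + 2 from rfl]
  linear_combination (-1 / 9 : ℚ) ^ N * h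

/-- For every odd positive `α`,
`∑_{i=0}^{α} C(α,i)(-1)^i [ C(i+(α-1)/2, α)(1/3)^{2i} + C(i+α/2, α)(1/3)^{2i+1} ] = 0`. -/
theorem identity_z_eq_third (α : ℕ) (hodd : Odd α) (hpos : 0 < α) :
    ∑ i ∈ Finset.range (α + 1), (α.choose i : ℚ) * (-1) ^ i *
      (gchoose ((i : ℚ) + ((α : ℚ) - 1) / 2) α * (1 / 3 : ℚ) ^ (2 * i) +
        gchoose ((i : ℚ) + (α : ℚ) / 2) α * (1 / 3 : ℚ) ^ (2 * i + 1)) = 0 :=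
  identity_z_eq_third_general α hodd
end

section
/- For every integer r, the identity ∑_{i=0}^{3} C(3,i)(-1)^i [ C(i + 1/2 + 3 - 2r, 3) z^{2i} + C(i + 4 - 2r, 3) z^{2i+1} ] = (1/(48))(1+z)·A_3(r,z) holds as polynomials in z over ℚ, where A_3(r,z) = (64r^3-576r^2+1712r-1680)z^6 + (48r^2-276r+393)z^5 + (-192r^3+1392r^2-3276r+2487)z^4 + (-96r^2+408r-408)z^3 + (192r^3-1056r^2+1848r-1032)z^2 + (48r^2-132r+87)z - 64r^3 + 240r^2 - 284r + 105. -/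
theorem gchoose_three (x : ℚ) : gchoose x 3 = x * (x - 1) * (x - 2) / 6 := by
  simp only [gchoose, descPochhammer_succ_eval, descPochhammer_zero, Polynomial.eval_one]
  norm_num [Nat.factorial]

/-- `Θ(3) = (1/48)(1+z)·A₃(r,z)` with `A₃` the explicit degree-6 polynomial in `z`. -/
theorem theta_three_factorization (r : ℤ) (z : ℚ) :
    ∑ i ∈ Finset.range 4, ((Nat.choose 3 i : ℚ)) * (-1) ^ i *
      (gchoose ((i : ℚ) + 1 / 2 + 3 - 2 * (r : ℚ)) 3 * z ^ (2 * i) +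
        gchoose ((i : ℚ) + 4 - 2 * (r : ℚ)) 3 * z ^ (2 * i + 1)) =
    (1 / 48 : ℚ) * (1 + z) *
      ((64 * (r:ℚ)^3 - 576 * (r:ℚ)^2 + 1712 * (r:ℚ) - 1680) * z ^ 6 +
       (48 * (r:ℚ)^2 - 276 * (r:ℚ) + 393) * z ^ 5 +
       (-192 * (r:ℚ)^3 + 1392 * (r:ℚ)^2 - 3276 * (r:ℚ) + 2487) * z ^ 4 +
       (-96 * (r:ℚ)^2 + 408 * (r:ℚ) - 408) * z ^ 3 +
       (192 * (r:ℚ)^3 - 1056 * (r:ℚ)^2 + 1848 * (r:ℚ) - 1032) * z ^ 2 +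
       (48 * (r:ℚ)^2 - 132 * (r:ℚ) + 87) * z +
       (-64 * (r:ℚ)^3 + 240 * (r:ℚ)^2 - 284 * (r:ℚ) + 105)) := by
  simp only [Finset.sum_range_succ, Finset.sum_range_zero, gchoose_three]
  norm_num [Nat.choose]
  ring
end

section
/- Let p be an odd prime, l ≥ 1, and let u be an integer. For any integers r, k with r = kp^l + 3, the difference of binomial coefficients C(u - 3(p^l+1)/2, p^l) - C(u - r(p^l+1)/2, p^l) is congruent to k/2 modulo p (where 1/2 denotes the inverse of 2 mod p), provided the arguments differ by kp^l(p^l+1)/2 ≡ (k/2)p^l (mod p^{l+1}). -/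
/-!
Since `p ∣ C(p^l, j)` for `0 < j < p^l`, Vandermonde's identity gives
`C(m + p^l, p^l) ≡ C(m, p^l) + 1` for every integer `m`; iterating, shifting the upper argument
by `c·p^l` adds `c`. The two arguments differ by `k·e·p^l` with `e = (p^l + 1)/2`, and
`2e ≡ 1 (mod p)`.
-/

open Finset

theorem cast_ringChoose_add_prime_pow {p : ℕ} (hp : p.Prime) (l : ℕ) (m : ℤ) :
    ((Ring.choose (m + p ^ l) (p ^ l) : ℤ) : ZMod p) = Ring.choose m (p ^ l) + 1 := by
  have hpow : ((p : ℤ) ^ l) = ((p ^ l : ℕ) : ℤ) := by push_cast; rfl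
  rw [hpow, Ring.add_choose_eq _ (Commute.all _ _), Int.cast_sum,
    sum_eq_add_of_mem (p ^ l, 0) (0, p ^ l) (by simp) (by simp)
      (by simp [hp.ne_zero])]
  · simp only [Ring.choose_natCast, Nat.choose_self, Ring.choose_zero_right]
    simp
  · rintro ⟨i, j⟩ hij ⟨hi, hj⟩
    rw [HasAntidiagonal.mem_antidiagonal] at hij
    have hdvd : p ∣ (p ^ l).choose j := hp.dvd_choose_pow (by grind) (by grind)
    rw [Ring.choose_natCast, Int.cast_mul, Int.cast_natCast,
      (ZMod.natCast_eq_zero_iff _ _).2 hdvd, mul_zero]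

theorem cast_ringChoose_add_mul_prime_pow {p : ℕ} (hp : p.Prime) (l : ℕ) (m c : ℤ) :
    ((Ring.choose (m + c * p ^ l) (p ^ l) : ℤ) : ZMod p) = Ring.choose m (p ^ l) + c := by
  induction c using Int.induction_on generalizing m with
  | zero => simp
  | succ n ih =>
    rw [show m + (n + 1) * (p : ℤ) ^ l = m + n * p ^ l + p ^ l by ring,
      cast_ringChoose_add_prime_pow hp, ih]
    push_cast; ring
  | pred n ih =>
    have := cast_ringChoose_add_prime_pow hp l (m + (-n - 1) * p ^ l)
    rw [show m + (-n - 1) * (p : ℤ) ^ l + p ^ l = m + -n * p ^ l by ring, ih] at this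
    push_cast at this ⊢
    linear_combination -this

theorem intCast_prime_pow_add_one_div_two {p : ℕ} (hp : p.Prime) (hpodd : Odd p) {l : ℕ}
    (hl : l ≠ 0) : ((((p : ℤ) ^ l + 1) / 2 : ℤ) : ZMod p) = (2 : ZMod p)⁻¹ := by
  have : Fact p.Prime := ⟨hp⟩
  have htwo : 2 * (((p : ℤ) ^ l + 1) / 2) = p ^ l + 1 :=
    Int.mul_ediv_cancel' (Odd.add_one (by exact_mod_cast hpodd.pow)).two_dvd
  have hcast : ((2 * (((p : ℤ) ^ l + 1) / 2) : ℤ) : ZMod p) = 1 := by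
    rw [htwo]
    simp [hl]
  apply eq_inv_of_mul_eq_one_right
  exact_mod_cast hcast

/-- For `p` an odd prime, `l ≥ 1` and `r = k·p^l + 3`, the difference of binomial
coefficients `C(u - 3(p^l+1)/2, p^l) - C(u - r(p^l+1)/2, p^l)` is congruent to `k/2`
modulo `p` (where `1/2` is the inverse of `2` mod `p`). -/
theorem binom_difference_mod_p
    (p : ℕ) (hp : p.Prime) (hpodd : Odd p) (l : ℕ) (hl : 1 ≤ l)
    (u r k : ℤ) (hr : r = k * (p : ℤ) ^ l + 3) :
    ((Ring.choose (u - 3 * (((p : ℤ) ^ l + 1) / 2)) (p ^ l) -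
        Ring.choose (u - r * (((p : ℤ) ^ l + 1) / 2)) (p ^ l) : ℤ) : ZMod p) =
      (k : ZMod p) * (2 : ZMod p)⁻¹ := by
  set e : ℤ := ((p : ℤ) ^ l + 1) / 2 with he
  have hshift : u - 3 * e = (u - r * e) + k * e * p ^ l := by rw [hr]; ring
  rw [hshift, Int.cast_sub, cast_ringChoose_add_mul_prime_pow hp, Int.cast_mul,
    he, intCast_prime_pow_add_one_div_two hp hpodd (by omega)]
  ring
end
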